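/- arXiv:2302.01188 — 2 statements merged into one kernel-verified Lean document; each statement's English description precedes it below -/
import Mathlib

section
/- Let V₁(s,a₁) = max_{a₂} Q(s,a₁,a₂) where Q is the optimal joint Q-function. Then V₁ is the unique fixed point of the best possible operator (T Q₁)(s,a₁) = max_{a₂} Σ_{s'} P(s'|s,a₁,a₂)[R(s,s') + γ max_{a₁'} Q₁(s',a₁')]. -/
open Finset

noncomputable def fmax {α : Type*} [Fintype α] [Nonempty α] (f : α → ℝ) : ℝ :=
  Finset.univ.sup' Finset.univ_nonempty f

/-- Best possible operator (two-agent form). -/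
noncomputable def bpo {S A1 A2 : Type*} [Fintype S] [Nonempty S]
    [Fintype A1] [Nonempty A1] [Fintype A2] [Nonempty A2]
    (P : S → A1 → A2 → S → ℝ) (R : S → S → ℝ) (γ : ℝ)
    (Q1 : S → A1 → ℝ) : S → A1 → ℝ :=
  fun s a1 => fmax (fun a2 =>
    ∑ s', P s a1 a2 s' * (R s s' + γ * fmax (fun a1' => Q1 s' a1')))

lemma le_fmax {α : Type*} [Fintype α] [Nonempty α] (f : α → ℝ) (a : α) :
    f a ≤ fmax f := Finset.le_sup' f (Finset.mem_univ a)

lemma fmax_le {α : Type*} [Fintype α] [Nonempty α] {f : α → ℝ} {c : ℝ}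
    (h : ∀ a, f a ≤ c) : fmax f ≤ c :=
  Finset.sup'_le _ _ fun a _ => h a

lemma fmax_congr {α : Type*} [Fintype α] [Nonempty α] {f g : α → ℝ}
    (h : ∀ a, f a = g a) : fmax f = fmax g := by
  unfold fmax; exact Finset.sup'_congr _ rfl fun a _ => h a

lemma abs_fmax_sub_le {α : Type*} [Fintype α] [Nonempty α] {f g : α → ℝ} {c : ℝ}
    (h : ∀ a, |f a - g a| ≤ c) : |fmax f - fmax g| ≤ c := by
  rw [abs_sub_le_iff]
  constructor
  · have : fmax f ≤ fmax g + c := fmax_le fun a => by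
      have := (abs_sub_le_iff.mp (h a)).1
      have := le_fmax g a
      linarith
    linarith
  · have : fmax g ≤ fmax f + c := fmax_le fun a => by
      have := (abs_sub_le_iff.mp (h a)).2
      have := le_fmax f a
      linarith
    linarith

lemma fmax_prod {α β : Type*} [Fintype α] [Nonempty α] [Fintype β] [Nonempty β]
    (f : α → β → ℝ) :
    fmax (fun p : α × β => f p.1 p.2) = fmax (fun a => fmax (fun b => f a b)) := by
  apply le_antisymm
  · exact fmax_le fun p => le_trans (le_fmax (fun b => f p.1 b) p.2)
      (le_fmax (fun a => fmax (fun b => f a b)) p.1)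
  · exact fmax_le fun a => fmax_le fun b =>
      le_fmax (fun p : α × β => f p.1 p.2) (a, b)

theorem stmt3
    {S A1 A2 : Type*} [Fintype S] [Nonempty S] [Fintype A1] [Nonempty A1]
    [Fintype A2] [Nonempty A2]
    (P : S → A1 → A2 → S → ℝ) (R : S → S → ℝ) (γ : ℝ)
    (hγ0 : 0 ≤ γ) (hγ1 : γ < 1)
    (hPnn : ∀ s a1 a2 s', 0 ≤ P s a1 a2 s')
    (hPsum : ∀ s a1 a2, ∑ s', P s a1 a2 s' = 1)
    (Q : S → A1 → A2 → ℝ)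
    (hQ : ∀ s a1 a2, Q s a1 a2 =
      ∑ s', P s a1 a2 s' * (R s s' + γ * fmax (fun p : A1 × A2 => Q s' p.1 p.2))) :
    (bpo P R γ (fun s a1 => fmax (fun a2 => Q s a1 a2)) =
      fun s a1 => fmax (fun a2 => Q s a1 a2)) ∧
    (∀ Q1 : S → A1 → ℝ, bpo P R γ Q1 = Q1 →
      Q1 = fun s a1 => fmax (fun a2 => Q s a1 a2)) := by
  set g : S → A1 → ℝ := fun s a1 => fmax (fun a2 => Q s a1 a2) with hg
  have hfix : bpo P R γ g = g := by
    funext s a1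
    show fmax _ = fmax _
    apply fmax_congr
    intro a2
    rw [hQ s a1 a2]
    apply Finset.sum_congr rfl
    intro s' _
    congr 2
    rw [fmax_prod]
  refine ⟨hfix, ?_⟩
  intro Q1 hQ1
  -- contraction argument
  set M : ℝ := fmax (fun p : S × A1 => |Q1 p.1 p.2 - g p.1 p.2|) with hM
  have hstep : ∀ s a1, |Q1 s a1 - g s a1| ≤ γ * M := by
    intro s a1
    have h1 : Q1 s a1 = bpo P R γ Q1 s a1 := by rw [hQ1]
    have h2 : g s a1 = bpo P R γ g s a1 := by rw [hfix]
    rw [h1, h2]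
    show |fmax _ - fmax _| ≤ γ * M
    apply abs_fmax_sub_le
    intro a2
    have key : (∑ s', P s a1 a2 s' * (R s s' + γ * fmax (fun a1' => Q1 s' a1'))) -
        (∑ s', P s a1 a2 s' * (R s s' + γ * fmax (fun a1' => g s' a1'))) =
        ∑ s', P s a1 a2 s' * (γ * (fmax (fun a1' => Q1 s' a1') - fmax (fun a1' => g s' a1'))) := by
      rw [← Finset.sum_sub_distrib]
      apply Finset.sum_congr rfl
      intro s' _
      ring
    rw [key]
    calc |∑ s', P s a1 a2 s' * (γ * (fmax (fun a1' => Q1 s' a1') - fmax (fun a1' => g s' a1')))|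
        ≤ ∑ s', |P s a1 a2 s' * (γ * (fmax (fun a1' => Q1 s' a1') - fmax (fun a1' => g s' a1')))| :=
          Finset.abs_sum_le_sum_abs _ _
      _ ≤ ∑ s', P s a1 a2 s' * (γ * M) := by
          apply Finset.sum_le_sum
          intro s' _
          rw [abs_mul, abs_of_nonneg (hPnn s a1 a2 s'), abs_mul, abs_of_nonneg hγ0]
          apply mul_le_mul_of_nonneg_left _ (hPnn s a1 a2 s')
          apply mul_le_mul_of_nonneg_left _ hγ0
          apply abs_fmax_sub_le
          intro a1'
          exact le_fmax (fun p : S × A1 => |Q1 p.1 p.2 - g p.1 p.2|) (s', a1')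
      _ = γ * M := by rw [← Finset.sum_mul, hPsum, one_mul]
  have hMle : M ≤ γ * M := fmax_le fun p => hstep p.1 p.2
  have hM0 : M ≤ 0 := by nlinarith
  funext s a1
  have h := le_trans (hstep s a1) (by nlinarith : γ * M ≤ 0)
  have := abs_nonneg (Q1 s a1 - g s a1)
  have : |Q1 s a1 - g s a1| = 0 := le_antisymm h this
  have := abs_eq_zero.mp this
  linarith [sub_eq_zero.mp this]
end

section
/- (Upper bound invariance) Let T be the best possible operator (T Q₁)(s,a₁) = max_{a₂} Σ_{s'} P(s'|s,a₁,a₂)[R(s,s') + γ max_{a₁'} Q₁(s',a₁')], and let V₁(s,a₁) = max_{a₂} Q(s,a₁,a₂) with Q the optimal joint Q-function. If Q₁ ≤ V₁ pointwise, then T Q₁ ≤ V₁ pointwise. Consequently, if Q₁⁰ is initialized pointwise ≤ V₁ (e.g., Q₁⁰ ≡ r_min/(1−γ)), then Tᵏ Q₁⁰ ≤ V₁ for all k. -/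
open Finset

lemma fmax_mono {α : Type*} [Fintype α] [Nonempty α] {f g : α → ℝ}
    (h : ∀ a, f a ≤ g a) : fmax f ≤ fmax g :=
  fmax_le fun a => (h a).trans (le_fmax g a)

theorem stmt4
    {S A1 A2 : Type*} [Fintype S] [Nonempty S] [Fintype A1] [Nonempty A1]
    [Fintype A2] [Nonempty A2]
    (P : S → A1 → A2 → S → ℝ) (R : S → S → ℝ) (γ : ℝ) (rmin rmax : ℝ)
    (hγ0 : 0 ≤ γ) (hγ1 : γ < 1)
    (hPnn : ∀ s a1 a2 s', 0 ≤ P s a1 a2 s')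
    (hPsum : ∀ s a1 a2, ∑ s', P s a1 a2 s' = 1)
    (hR : ∀ s s', R s s' ∈ Set.Icc rmin rmax)
    (Q : S → A1 → A2 → ℝ)
    (hQ : ∀ s a1 a2, Q s a1 a2 =
      ∑ s', P s a1 a2 s' * (R s s' + γ * fmax (fun p : A1 × A2 => Q s' p.1 p.2)))
    (V1 : S → A1 → ℝ)
    (hV1 : ∀ s a1, V1 s a1 = fmax (fun a2 => Q s a1 a2)) :
    (∀ Q1 : S → A1 → ℝ, (∀ s a1, Q1 s a1 ≤ V1 s a1) →
      ∀ s a1, bpo P R γ Q1 s a1 ≤ V1 s a1) ∧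
    (∀ Q10 : S → A1 → ℝ, (∀ s a1, Q10 s a1 ≤ V1 s a1) →
      ∀ k : ℕ, ∀ s a1, (bpo P R γ)^[k] Q10 s a1 ≤ V1 s a1) := by
  have key : ∀ Q1 : S → A1 → ℝ, (∀ s a1, Q1 s a1 ≤ V1 s a1) →
      ∀ s a1, bpo P R γ Q1 s a1 ≤ V1 s a1 := by
    intro Q1 hle s a1
    have hV1pair : ∀ s', fmax (fun a1' => Q1 s' a1') ≤
        fmax (fun p : A1 × A2 => Q s' p.1 p.2) := by
      intro s'
      apply fmax_le
      intro a1'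
      refine (hle s' a1').trans ?_
      rw [hV1]
      exact fmax_le fun a2 => le_fmax (fun p : A1 × A2 => Q s' p.1 p.2) (a1', a2)
    rw [hV1, bpo]
    apply fmax_mono
    intro a2
    rw [hQ]
    apply Finset.sum_le_sum
    intro s' _
    apply mul_le_mul_of_nonneg_left _ (hPnn s a1 a2 s')
    have := mul_le_mul_of_nonneg_left (hV1pair s') hγ0
    linarith
  refine ⟨key, fun Q10 h0 k => ?_⟩
  induction k with
  | zero => simpa using h0
  | succ n ih =>
    rw [Function.iterate_succ_apply']
    exact key _ ih
end
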